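/- arXiv:1804.08575 — 2 statements merged into one kernel-verified Lean document; each statement's English description precedes it below -/
import Mathlib

section
/- Let f: ℝ × ℝ^d → ℝ^d be Lipschitz continuous in its second argument with constant L, and let A: [0,1]×[0,1] → ℝ be a continuous coefficient function. If the step size h > 0 satisfies h < 1 / (L · max_{τ∈[0,1]} ∫₀¹ |A(τ,σ)| dσ), then the fixed-point equation Z(τ) = z₀ + h ∫₀¹ A(τ,σ) f(t₀ + C(σ)h, Z(σ)) dσ for continuous Z: [0,1] → ℝ^d has a unique solution. -/
/-!
The stage equation is a Hammerstein integral equation `Z = z₀ + h ∫₀¹ A(·,σ) g(σ, Z σ) dσ`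
with `g σ x = f (t₀ + C σ h) x`. On the Banach space `C([0,1], E)` its right-hand side is
Lipschitz with constant `|h| · M · L`, where `M = max_τ ∫₀¹ |A(τ,σ)| dσ` is finite because
`τ ↦ ∫₀¹ |A(τ,σ)| dσ` is continuous on a compact interval. The step-size restriction says exactly
that this constant is `< 1`, so the Banach fixed point theorem applies. Functions `ℝ → E` that are
continuous on `[0,1]` are identified with `C([0,1], E)` by restriction and `Set.IccExtend`.
-/

open MeasureTheory Set Function

theorem continuousOn_intervalIntegral_of_continuousOn_prod {E : Type*} [NormedAddCommGroup E]
    [NormedSpace ℝ E] {F : ℝ → ℝ → E} {a b c d : ℝ} (hcd : c ≤ d)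
    (hF : ContinuousOn (uncurry F) (Icc a b ×ˢ Icc c d)) :
    ContinuousOn (fun x => ∫ t in c..d, F x t) (Icc a b) := by
  rw [continuousOn_iff_continuous_domRestrict]
  have hG : Continuous (uncurry fun (x : Icc a b) t => F x (projIcc c d hcd t)) :=
    hF.comp_continuous (f := fun p : Icc a b × ℝ => ((p.1 : ℝ), (projIcc c d hcd p.2 : ℝ)))
      (by fun_prop) fun p => ⟨p.1.2, (projIcc c d hcd p.2).2⟩
  refine (intervalIntegral.continuous_parametric_intervalIntegral_of_continuous' hG c d).congr
    fun x => intervalIntegral.integral_congr fun t ht => ?_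
  rw [uIcc_of_le hcd] at ht
  simp [projIcc_of_mem hcd ht]

section StageEquation

variable {E : Type*} [NormedAddCommGroup E] [NormedSpace ℝ E]
  {A : ℝ → ℝ → ℝ} {g : ℝ → E → E} {z₀ : E} {h L : ℝ}

noncomputable def stageRHS (A : ℝ → ℝ → ℝ) (g : ℝ → E → E) (z₀ : E) (h : ℝ) (Z : ℝ → E)
    (τ : ℝ) : E :=
  z₀ + h • ∫ σ in (0:ℝ)..1, A τ σ • g σ (Z σ)

theorem stageRHS_congr {Z W : ℝ → E} (hZW : EqOn Z W (Icc 0 1)) (τ : ℝ) :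
    stageRHS A g z₀ h Z τ = stageRHS A g z₀ h W τ := by
  refine congrArg (z₀ + h • ·) (intervalIntegral.integral_congr fun σ hσ => ?_)
  rw [uIcc_of_le zero_le_one] at hσ
  simp only [hZW hσ]

variable (hA : ContinuousOn (uncurry A) (Icc 0 1 ×ˢ Icc 0 1))
  (hg : ContinuousOn (uncurry g) (Icc 0 1 ×ˢ univ))
include hA hg

theorem continuousOn_stageIntegrand {Z : ℝ → E} (hZ : ContinuousOn Z (Icc 0 1)) :
    ContinuousOn (uncurry fun τ σ => A τ σ • g σ (Z σ)) (Icc 0 1 ×ˢ Icc 0 1) :=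
  hA.smul <| hg.comp (continuousOn_snd.prodMk (hZ.comp continuousOn_snd fun _ hp => hp.2))
    fun _ hp => ⟨hp.2, mem_univ _⟩

theorem continuousOn_stageRHS {Z : ℝ → E} (hZ : ContinuousOn Z (Icc 0 1)) :
    ContinuousOn (stageRHS A g z₀ h Z) (Icc 0 1) :=
  continuousOn_const.add <| (continuousOn_intervalIntegral_of_continuousOn_prod zero_le_one
    (continuousOn_stageIntegrand hA hg hZ)).const_smul h

theorem norm_stageRHS_sub_le (hL : 0 ≤ L) (hgL : ∀ σ x y, ‖g σ x - g σ y‖ ≤ L * ‖x - y‖)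
    {Z W : ℝ → E} (hZ : ContinuousOn Z (Icc 0 1)) (hW : ContinuousOn W (Icc 0 1)) {D : ℝ}
    (hD : ∀ σ ∈ Icc (0:ℝ) 1, ‖Z σ - W σ‖ ≤ D) {τ : ℝ} (hτ : τ ∈ Icc (0:ℝ) 1) :
    ‖stageRHS A g z₀ h Z τ - stageRHS A g z₀ h W τ‖ ≤
      |h| * ((∫ σ in (0:ℝ)..1, |A τ σ|) * (L * D)) := by
  have hint : ∀ {V : ℝ → E}, ContinuousOn V (Icc 0 1) →
      IntervalIntegrable (fun σ => A τ σ • g σ (V σ)) volume 0 1 := fun hV =>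
    ((continuousOn_stageIntegrand hA hg hV).comp (continuousOn_const.prodMk continuousOn_id)
      fun σ hσ => ⟨hτ, hσ⟩).intervalIntegrable_of_Icc zero_le_one
  have hAint : IntervalIntegrable (fun σ => |A τ σ|) volume 0 1 :=
    ((hA.comp (continuousOn_const.prodMk continuousOn_id) fun σ hσ => ⟨hτ, hσ⟩).abs
      ).intervalIntegrable_of_Icc zero_le_one
  rw [stageRHS, stageRHS, add_sub_add_left_eq_sub, ← smul_sub,
    ← intervalIntegral.integral_sub (hint hZ) (hint hW), norm_smul, Real.norm_eq_abs,
    ← intervalIntegral.integral_mul_const]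
  refine mul_le_mul_of_nonneg_left (intervalIntegral.norm_integral_le_of_norm_le zero_le_one
    (ae_of_all _ fun σ hσ => ?_) (hAint.mul_const _)) (abs_nonneg h)
  rw [← smul_sub, norm_smul, Real.norm_eq_abs]
  exact mul_le_mul_of_nonneg_left ((hgL σ _ _).trans (mul_le_mul_of_nonneg_left
    (hD σ (Ioc_subset_Icc_self hσ)) hL)) (abs_nonneg _)

noncomputable def stageOperator (z₀ : E) (h : ℝ) (Z : C(Icc (0:ℝ) 1, E)) :
    C(Icc (0:ℝ) 1, E) :=
  ⟨(Icc 0 1).domRestrict (stageRHS A g z₀ h (IccExtend zero_le_one Z)),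
    (continuousOn_stageRHS hA hg Z.continuous.Icc_extend'.continuousOn).domRestrict⟩

theorem isFixedPt_stageOperator_iff {Z : C(Icc (0:ℝ) 1, E)} :
    IsFixedPt (stageOperator hA hg z₀ h) Z ↔
      EqOn (IccExtend zero_le_one Z) (stageRHS A g z₀ h (IccExtend zero_le_one Z)) (Icc 0 1) := by
  refine ⟨fun hZ τ hτ => ?_, fun hZ => ContinuousMap.ext fun τ => ?_⟩
  · rw [IccExtend_of_mem _ _ hτ]
    exact (DFunLike.congr_fun hZ ⟨τ, hτ⟩).symm
  · have hτ := hZ τ.2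
    rw [IccExtend_val] at hτ
    exact hτ.symm

theorem dist_stageOperator_le (hL : 0 ≤ L) (hgL : ∀ σ x y, ‖g σ x - g σ y‖ ≤ L * ‖x - y‖) {M : ℝ}
    (hM : ∀ τ ∈ Icc (0:ℝ) 1, ∫ σ in (0:ℝ)..1, |A τ σ| ≤ M) (Z W : C(Icc (0:ℝ) 1, E)) :
    dist (stageOperator hA hg z₀ h Z) (stageOperator hA hg z₀ h W) ≤
      |h| * (M * L) * dist Z W := by
  have := nonempty_Icc_subtype (zero_le_one' ℝ)
  refine (ContinuousMap.dist_le_iff_of_nonempty).2 fun τ => ?_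
  have hD : ∀ σ ∈ Icc (0:ℝ) 1,
      ‖IccExtend zero_le_one Z σ - IccExtend zero_le_one W σ‖ ≤ dist Z W := fun σ hσ => by
      rw [IccExtend_of_mem _ _ hσ, IccExtend_of_mem _ _ hσ, ← dist_eq_norm]
      exact ContinuousMap.dist_apply_le_dist _
  calc dist (stageOperator hA hg z₀ h Z τ) (stageOperator hA hg z₀ h W τ)
      ≤ |h| * ((∫ σ in (0:ℝ)..1, |A τ σ|) * (L * dist Z W)) := by
        rw [dist_eq_norm]
        exact norm_stageRHS_sub_le hA hg hL hgL Z.continuous.Icc_extend'.continuousOn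
          W.continuous.Icc_extend'.continuousOn hD τ.2
    _ ≤ |h| * (M * (L * dist Z W)) := by
        gcongr
        exact hM τ τ.2
    _ = |h| * (M * L) * dist Z W := by ring

theorem exists_unique_eqOn_stageRHS [CompleteSpace E] (hL : 0 ≤ L)
    (hgL : ∀ σ x y, ‖g σ x - g σ y‖ ≤ L * ‖x - y‖) {M : ℝ}
    (hM : ∀ τ ∈ Icc (0:ℝ) 1, ∫ σ in (0:ℝ)..1, |A τ σ| ≤ M) (hk : |h| * (M * L) < 1) :
    ∃ Z : ℝ → E, ContinuousOn Z (Icc 0 1) ∧ EqOn Z (stageRHS A g z₀ h Z) (Icc 0 1) ∧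
      ∀ W : ℝ → E, ContinuousOn W (Icc 0 1) → EqOn W (stageRHS A g z₀ h W) (Icc 0 1) →
        EqOn W Z (Icc 0 1) := by
  have hT : ContractingWith (|h| * (M * L)).toNNReal (stageOperator hA hg z₀ h) :=
    ⟨Real.toNNReal_lt_one.2 hk, LipschitzWith.of_dist_le' (dist_stageOperator_le hA hg hL hgL hM)⟩
  have := nonempty_Icc_subtype (zero_le_one' ℝ)
  refine ⟨IccExtend zero_le_one hT.fixedPoint, hT.fixedPoint.continuous.Icc_extend'.continuousOn,
    (isFixedPt_stageOperator_iff hA hg).1 hT.fixedPoint_isFixedPt, fun W hW hWsol => ?_⟩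
  let Wc : C(Icc (0:ℝ) 1, E) := ⟨(Icc 0 1).domRestrict W, hW.domRestrict⟩
  have hWc : EqOn (IccExtend zero_le_one Wc) W (Icc 0 1) := fun τ hτ => IccExtend_of_mem _ _ hτ
  have hfix : IsFixedPt (stageOperator hA hg z₀ h) Wc :=
    (isFixedPt_stageOperator_iff hA hg).2 fun τ hτ => by
      rw [hWc hτ, stageRHS_congr hWc]
      exact hWsol hτ
  rw [← hT.fixedPoint_unique hfix]
  exact hWc.symm

end StageEquation

theorem csRK_stage_exists_unique_general
    (d : ℕ) (L : ℝ)
    (f : ℝ → EuclideanSpace ℝ (Fin d) → EuclideanSpace ℝ (Fin d))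
    (hf : ∀ t x y, ‖f t x - f t y‖ ≤ L * ‖x - y‖)
    (hfc : Continuous fun p : ℝ × EuclideanSpace ℝ (Fin d) => f p.1 p.2)
    (A : ℝ → ℝ → ℝ)
    (hA : ContinuousOn (fun p : ℝ × ℝ => A p.1 p.2) (Set.Icc 0 1 ×ˢ Set.Icc 0 1))
    (C : ℝ → ℝ) (hC : ContinuousOn C (Set.Icc 0 1))
    (z₀ : EuclideanSpace ℝ (Fin d)) (t₀ : ℝ) (h : ℝ) (hh : 0 < h)
    (hstep : h < 1 / (L * sSup ((fun τ => ∫ σ in (0:ℝ)..1, |A τ σ|) '' Set.Icc 0 1))) :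
    ∃ Z : ℝ → EuclideanSpace ℝ (Fin d), ContinuousOn Z (Set.Icc 0 1) ∧
      (∀ τ ∈ Set.Icc (0:ℝ) 1,
        Z τ = z₀ + h • ∫ σ in (0:ℝ)..1, A τ σ • f (t₀ + C σ * h) (Z σ)) ∧
      (∀ W : ℝ → EuclideanSpace ℝ (Fin d), ContinuousOn W (Set.Icc 0 1) →
        (∀ τ ∈ Set.Icc (0:ℝ) 1,
          W τ = z₀ + h • ∫ σ in (0:ℝ)..1, A τ σ • f (t₀ + C σ * h) (W σ)) →
        Set.EqOn W Z (Set.Icc 0 1)) := by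
  set M := sSup ((fun τ => ∫ σ in (0:ℝ)..1, |A τ σ|) '' Icc 0 1)
  have hg : ContinuousOn (uncurry fun σ x => f (t₀ + C σ * h) x) (Icc 0 1 ×ˢ univ) :=
    hfc.comp_continuousOn <| (continuousOn_const.add <|
      (hC.comp continuousOn_fst fun _ hp => hp.1).mul continuousOn_const).prodMk continuousOn_snd
  have hM : ∀ τ ∈ Icc (0:ℝ) 1, ∫ σ in (0:ℝ)..1, |A τ σ| ≤ M := fun τ hτ =>
    le_csSup (isCompact_Icc.bddAbove_image
      (continuousOn_intervalIntegral_of_continuousOn_prod zero_le_one hA.abs))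
      (mem_image_of_mem _ hτ)
  have hM₀ : 0 ≤ M := (intervalIntegral.integral_nonneg zero_le_one fun _ _ => abs_nonneg _).trans
    (hM 0 (left_mem_Icc.2 zero_le_one))
  -- otherwise `1 / (L * M) ≤ 0` (also when `L * M = 0`, where `1 / 0 = 0`)
  have hLM : 0 < L * M := by
    by_contra! hLM
    exact (hh.trans hstep).not_ge (one_div_nonpos.2 hLM)
  exact exists_unique_eqOn_stageRHS hA hg (pos_of_mul_pos_left hLM hM₀).le (fun σ => hf _) hM
    (by rw [abs_of_pos hh, mul_comm M]; exact (lt_div_iff₀ hLM).1 hstep)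

/-- Existence and uniqueness of the internal stages of a continuous-stage
Runge–Kutta method under the step-size restriction
h < 1 / (L · max_{τ∈[0,1]} ∫₀¹ |A(τ,σ)| dσ). -/
theorem csRK_stage_exists_unique
    (d : ℕ) (L : ℝ) (hL : 0 < L)
    (f : ℝ → EuclideanSpace ℝ (Fin d) → EuclideanSpace ℝ (Fin d))
    (hf : ∀ t x y, ‖f t x - f t y‖ ≤ L * ‖x - y‖)
    (hfc : Continuous fun p : ℝ × EuclideanSpace ℝ (Fin d) => f p.1 p.2)
    (A : ℝ → ℝ → ℝ)
    (hA : ContinuousOn (fun p : ℝ × ℝ => A p.1 p.2) (Set.Icc 0 1 ×ˢ Set.Icc 0 1))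
    (C : ℝ → ℝ) (hC : ContinuousOn C (Set.Icc 0 1))
    (hCmap : Set.MapsTo C (Set.Icc 0 1) (Set.Icc 0 1))
    (z₀ : EuclideanSpace ℝ (Fin d)) (t₀ : ℝ) (h : ℝ) (hh : 0 < h)
    (hstep : h < 1 / (L * sSup ((fun τ => ∫ σ in (0:ℝ)..1, |A τ σ|) '' Set.Icc 0 1))) :
    ∃ Z : ℝ → EuclideanSpace ℝ (Fin d), ContinuousOn Z (Set.Icc 0 1) ∧
      (∀ τ ∈ Set.Icc (0:ℝ) 1,
        Z τ = z₀ + h • ∫ σ in (0:ℝ)..1, A τ σ • f (t₀ + C σ * h) (Z σ)) ∧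
      (∀ W : ℝ → EuclideanSpace ℝ (Fin d), ContinuousOn W (Set.Icc 0 1) →
        (∀ τ ∈ Set.Icc (0:ℝ) 1,
          W τ = z₀ + h • ∫ σ in (0:ℝ)..1, A τ σ • f (t₀ + C σ * h) (W σ)) →
        Set.EqOn W Z (Set.Icc 0 1)) :=
  csRK_stage_exists_unique_general d L f hf hfc A hA C hC z₀ t₀ h hh hstep
end

section
/- Let H: ℝ^{2d} → ℝ be continuously differentiable, f(z) = J⁻¹ ∇H(z), and let A(τ,σ) = Σ_{ι=0}^{N} ω_ι (∫₀^τ P_ι(x) dx) P_ι(σ) with ω₀ = 1, where P_ι are the normalized shifted Legendre polynomials on [0,1]. Suppose Z: [0,1] → ℝ^{2d} is continuously differentiable and satisfies Z(τ) = z₀ + h ∫₀¹ A(τ,σ) f(Z(σ)) dσ for all τ, and z₁ = z₀ + h ∫₀¹ f(Z(τ)) dτ. Then Z(0) = z₀, Z(1) = z₁, and H(z₁) = H(z₀). -/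
open Matrix

/-- The ι-th normalized shifted Legendre polynomial on [0,1], via Rodrigues' formula. -/
noncomputable def legP (ι : ℕ) (x : ℝ) : ℝ :=
  (Real.sqrt (2 * ι + 1) / (Nat.factorial ι)) *
    iteratedDeriv ι (fun y : ℝ => y ^ ι * (y - 1) ^ ι) x

/-!
Because `A(τ, σ)` is a finite sum of separable terms, the stage equation says
`Z τ = z₀ + h ∑ ι, ω ι (∫₀^τ P ι) v ι` with `v ι = ∫₀¹ P ι σ f(Z σ) dσ`. At `τ = 0` the sum
vanishes, and at `τ = 1` only the term `ι = 0` survives since `∫₀¹ P ι = δ ι 0` (for `ι ≥ 1`,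
`P ι` is the derivative of a polynomial vanishing at `0` and `1`). Differentiating the expansion,
`H(z₁) - H(z₀) = ∫₀¹ ∇H(Z)ᵀ Z' = h ∑ ι, ω ι (u ι)ᵀ J⁻¹ (u ι)` with `u ι = ∫₀¹ P ι ∇H(Z)`, and every
term vanishes because `J⁻¹` is skew-symmetric.
-/

open MeasureTheory

section Legendre

open Polynomial
open scoped Nat

theorem Polynomial.iteratedDeriv_eval {𝕜 : Type*} [NontriviallyNormedField 𝕜] (p : 𝕜[X])
    (n : ℕ) : iteratedDeriv n (fun x => p.eval x) = fun x => (derivative^[n] p).eval x := by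
  induction n with
  | zero => simp
  | succ n ih =>
    ext x
    rw [iteratedDeriv_succ, ih, Function.iterate_succ_apply', Polynomial.deriv]

theorem Polynomial.eval_iterate_derivative_eq_zero_of_pow_dvd {R : Type*} [CommRing R]
    {p : R[X]} {t : R} (k : ℕ) (hp : (X - C t) ^ (k + 1) ∣ p) :
    (derivative^[k] p).eval t = 0 := by
  have hdvd := pow_sub_dvd_iterate_derivative_of_pow_dvd k hp
  rw [Nat.add_sub_cancel_left, pow_one] at hdvd
  exact dvd_iff_isRoot.mp hdvd

theorem legP_eq_eval (ι : ℕ) :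
    legP ι = fun x => √(2 * ι + 1) / ι ! *
      (derivative^[ι] (X ^ ι * (X - C 1) ^ ι : ℝ[X])).eval x := by
  have hpoly : (fun y : ℝ => y ^ ι * (y - 1) ^ ι) =
      fun y => (X ^ ι * (X - C 1) ^ ι : ℝ[X]).eval y := by
    ext y; simp
  ext x
  rw [legP, hpoly, Polynomial.iteratedDeriv_eval]

theorem continuous_legP (ι : ℕ) : Continuous (legP ι) := by
  rw [legP_eq_eval]
  exact continuous_const.mul (Polynomial.continuous _)

theorem legP_zero (x : ℝ) : legP 0 x = 1 := by
  simp [legP]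

theorem integral_legP_succ (k : ℕ) : ∫ x in (0 : ℝ)..1, legP (k + 1) x = 0 := by
  set q : ℝ[X] := derivative^[k] (X ^ (k + 1) * (X - C 1) ^ (k + 1)) with hq
  have hq0 : q.eval 0 = 0 := by
    refine eval_iterate_derivative_eq_zero_of_pow_dvd k (dvd_mul_of_dvd_left ?_ _)
    simp
  have hq1 : q.eval 1 = 0 :=
    eval_iterate_derivative_eq_zero_of_pow_dvd k (dvd_mul_left _ _)
  have hFTC := intervalIntegral.integral_eq_sub_of_hasDerivAt (fun x _ => q.hasDerivAt x)
    ((derivative q).continuous.intervalIntegrable 0 1)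
  rw [legP_eq_eval, Function.iterate_succ_apply', ← hq, intervalIntegral.integral_const_mul,
    hFTC, hq0, hq1, sub_zero, mul_zero]

end Legendre

section SkewDotProduct

variable {n : Type*} [Fintype n]

theorem dotProduct_mulVec_self_eq_zero_of_transpose_eq_neg {S : Matrix n n ℝ} (hS : Sᵀ = -S)
    (u : n → ℝ) : u ⬝ᵥ S *ᵥ u = 0 := by
  have hneg : u ⬝ᵥ S *ᵥ u = -(u ⬝ᵥ S *ᵥ u) := by
    calc u ⬝ᵥ S *ᵥ u = Sᵀ *ᵥ u ⬝ᵥ u := by rw [dotProduct_mulVec, mulVec_transpose]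
      _ = -(u ⬝ᵥ S *ᵥ u) := by rw [hS, neg_mulVec, neg_dotProduct, dotProduct_comm]
  linarith

theorem intervalIntegral.integral_mulVec (S : Matrix n n ℝ) {F : ℝ → n → ℝ} {a b : ℝ}
    (hF : IntervalIntegrable F volume a b) :
    ∫ τ in a..b, S *ᵥ F τ = S *ᵥ ∫ τ in a..b, F τ :=
  (mulVecLin S).toContinuousLinearMap.intervalIntegral_comp_comm hF

theorem intervalIntegral.integral_dotProduct_const {F : ℝ → n → ℝ} {a b : ℝ}
    (hF : IntervalIntegrable F volume a b) (w : n → ℝ) :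
    ∫ τ in a..b, F τ ⬝ᵥ w = (∫ τ in a..b, F τ) ⬝ᵥ w :=
  ((dotProductBilin ℝ ℝ).flip w).toContinuousLinearMap.intervalIntegral_comp_comm hF

theorem integral_mul_dotProduct_mulVec_integral_eq_zero {S : Matrix n n ℝ} (hS : Sᵀ = -S)
    {p : ℝ → ℝ} {g : ℝ → n → ℝ} {a b : ℝ}
    (hpg : IntervalIntegrable (fun τ => p τ • g τ) volume a b) :
    ∫ τ in a..b, p τ * (g τ ⬝ᵥ S *ᵥ ∫ σ in a..b, p σ • g σ) = 0 := by
  simp_rw [← smul_eq_mul, ← smul_dotProduct]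
  rw [intervalIntegral.integral_dotProduct_const hpg]
  exact dotProduct_mulVec_self_eq_zero_of_transpose_eq_neg hS _

end SkewDotProduct

section Gradient

variable {n : Type*} [Fintype n] [DecidableEq n]

theorem ContinuousLinearMap.apply_eq_dotProduct (L : (n → ℝ) →L[ℝ] ℝ) {g : n → ℝ}
    (hg : ∀ i, g i = L (Pi.single i 1)) (w : n → ℝ) : L w = g ⬝ᵥ w := by
  conv_lhs => rw [← Finset.univ_sum_single w]
  refine (map_sum L _ _).trans (Finset.sum_congr rfl fun i _ => ?_)
  rw [hg, mul_comm, ← smul_eq_mul, ← map_smul, ← Pi.single_smul, smul_eq_mul, mul_one]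

theorem continuous_grad {H : (n → ℝ) → ℝ} (hH : ContDiff ℝ 1 H) {gradH : (n → ℝ) → n → ℝ}
    (hgrad : ∀ z i, gradH z i = fderiv ℝ H z (Pi.single i 1)) : Continuous gradH := by
  have hgradH : gradH = fun z i => fderiv ℝ H z (Pi.single i 1) := funext₂ hgrad
  rw [hgradH]
  exact continuous_pi fun i => (hH.continuous_fderiv one_ne_zero).clm_apply continuous_const

end Gradient

theorem intervalIntegral.integral_finsetSum_mul_smul {E ι : Type*} [NormedAddCommGroup E]
    [NormedSpace ℝ E] (s : Finset ι) (c : ι → ℝ) {p : ι → ℝ → ℝ} {g : ℝ → E} {a b : ℝ}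
    (hpg : ∀ i ∈ s, IntervalIntegrable (fun σ => p i σ • g σ) volume a b) :
    ∫ σ in a..b, (∑ i ∈ s, c i * p i σ) • g σ = ∑ i ∈ s, c i • ∫ σ in a..b, p i σ • g σ := by
  simp_rw [Finset.sum_smul, mul_smul]
  have hcpg : ∀ i ∈ s, IntervalIntegrable (fun σ => c i • p i σ • g σ) volume a b :=
    fun i hi => (hpg i hi).smul (c i)
  rw [intervalIntegral.integral_finsetSum hcpg]
  simp_rw [intervalIntegral.integral_smul]

theorem energy_eq_of_hasDerivAt {n ι : Type*} [Fintype n] [DecidableEq n]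
    {H : (n → ℝ) → ℝ} (hH : ContDiff ℝ 1 H) {gradH : (n → ℝ) → n → ℝ}
    (hgrad : ∀ z i, gradH z i = fderiv ℝ H z (Pi.single i 1))
    {S : Matrix n n ℝ} (hS : Sᵀ = -S) {f : (n → ℝ) → n → ℝ} (hf : ∀ z, f z = S *ᵥ gradH z)
    (s : Finset ι) (c : ι → ℝ) {p : ι → ℝ → ℝ} (hp : ∀ i, Continuous (p i)) (h : ℝ)
    {Z : ℝ → n → ℝ}
    (hZ' : ∀ τ, HasDerivAt Z (h • ∑ i ∈ s, (c i * p i τ) • ∫ σ in (0:ℝ)..1, p i σ • f (Z σ)) τ) :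
    H (Z 1) = H (Z 0) := by
  have hZ : Continuous Z := continuous_iff_continuousAt.2 fun τ => (hZ' τ).continuousAt
  set g : ℝ → n → ℝ := fun τ => gradH (Z τ)
  have hg : Continuous g := (continuous_grad hH hgrad).comp hZ
  have hpg : ∀ i, IntervalIntegrable (fun σ => p i σ • g σ) volume 0 1 :=
    fun i => ((hp i).smul hg).intervalIntegrable 0 1
  set u : ι → n → ℝ := fun i => ∫ σ in (0:ℝ)..1, p i σ • g σ
  have hfu : ∀ i, ∫ σ in (0:ℝ)..1, p i σ • f (Z σ) = S *ᵥ u i := fun i => by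
    simp_rw [hf, ← mulVec_smul]
    exact intervalIntegral.integral_mulVec S (hpg i)
  set D : ι → ℝ → ℝ := fun i τ => p i τ * (g τ ⬝ᵥ S *ᵥ u i)
  have hHZ' : ∀ τ, HasDerivAt (fun t => H (Z t)) (∑ i ∈ s, (h * c i) * D i τ) τ := by
    intro τ
    refine ((hH.differentiable one_ne_zero (Z τ)).hasFDerivAt.comp_hasDerivAt τ
      (hZ' τ)).congr_deriv ?_
    rw [ContinuousLinearMap.apply_eq_dotProduct _ (hgrad (Z τ))]
    simp only [hfu, dotProduct_smul, dotProduct_sum, Finset.mul_sum, smul_eq_mul, D]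
    exact Finset.sum_congr rfl fun i _ => by ring
  have hD : ∀ i, Continuous (D i) := fun i => (hp i).mul (hg.dotProduct continuous_const)
  have hFTC := intervalIntegral.integral_eq_sub_of_hasDerivAt (fun τ _ => hHZ' τ)
    ((continuous_finsetSum s fun i _ => continuous_const.mul (hD i)).intervalIntegrable 0 1)
  have hD0 : ∀ i, ∫ τ in (0:ℝ)..1, D i τ = 0 :=
    fun i => integral_mul_dotProduct_mulVec_integral_eq_zero hS (hpg i)
  rw [intervalIntegral.integral_finsetSum fun i _ =>
    ((hD i).intervalIntegrable 0 1).const_mul (h * c i)] at hFTC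
  simp only [intervalIntegral.integral_const_mul, hD0, mul_zero, Finset.sum_const_zero] at hFTC
  linarith

theorem Matrix.inv_fromBlocks_zero_one_neg_one_zero (l R : Type*) [Fintype l] [DecidableEq l]
    [CommRing R] : (fromBlocks 0 1 (-1) 0 : Matrix (l ⊕ l) (l ⊕ l) R)⁻¹ = J l R := by
  have hneg : (fromBlocks 0 1 (-1) 0 : Matrix (l ⊕ l) (l ⊕ l) R) = -J l R := by
    simp [J, fromBlocks_neg]
  rw [hneg]
  refine inv_eq_right_inv ?_
  rw [Matrix.neg_mul, J_squared, neg_neg]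

/-- The csRK method with B ≡ 1, C_τ = τ and
A(τ,σ) = Σ_{ι=0}^{N} ω_ι (∫₀^τ P_ι) P_ι(σ), ω₀ = 1, applied to a Hamiltonian
system ż = J⁻¹∇H(z), satisfies Z(0) = z₀, Z(1) = z₁ and preserves the energy:
H(z₁) = H(z₀). -/
theorem csRK_energy_preserving
    (d : ℕ) (h : ℝ)
    (H : (Fin d ⊕ Fin d → ℝ) → ℝ) (hH : ContDiff ℝ 1 H)
    (gradH : (Fin d ⊕ Fin d → ℝ) → (Fin d ⊕ Fin d → ℝ))
    (hgrad : ∀ z i, gradH z i = fderiv ℝ H z (Pi.single i 1))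
    (J : Matrix (Fin d ⊕ Fin d) (Fin d ⊕ Fin d) ℝ)
    (hJ : J = Matrix.fromBlocks 0 1 (-1) 0)
    (f : (Fin d ⊕ Fin d → ℝ) → (Fin d ⊕ Fin d → ℝ))
    (hf : ∀ z, f z = J⁻¹ *ᵥ gradH z)
    (N : ℕ) (ω : ℕ → ℝ) (hω0 : ω 0 = 1)
    (A : ℝ → ℝ → ℝ)
    (hA : ∀ τ σ : ℝ, A τ σ =
      ∑ ι ∈ Finset.range (N + 1), ω ι * (∫ x in (0:ℝ)..τ, legP ι x) * legP ι σ)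
    (Z : ℝ → (Fin d ⊕ Fin d → ℝ)) (hZ : ContDiff ℝ 1 Z)
    (z₀ z₁ : Fin d ⊕ Fin d → ℝ)
    (hstage : ∀ τ : ℝ, Z τ = z₀ + h • ∫ σ in (0:ℝ)..1, A τ σ • f (Z σ))
    (hz₁ : z₁ = z₀ + h • ∫ τ in (0:ℝ)..1, f (Z τ)) :
    Z 0 = z₀ ∧ Z 1 = z₁ ∧ H z₁ = H z₀ := by
  have hJinv : J⁻¹ = Matrix.J (Fin d) ℝ := by rw [hJ, inv_fromBlocks_zero_one_neg_one_zero]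
  have hfZ : Continuous fun σ => f (Z σ) := by
    rw [funext hf]
    exact (continuous_const.matrix_mulVec (continuous_grad hH hgrad)).comp hZ.continuous
  set v : ℕ → Fin d ⊕ Fin d → ℝ := fun ι => ∫ σ in (0:ℝ)..1, legP ι σ • f (Z σ)
  have hZ_eq : ∀ τ, Z τ = z₀ + h • ∑ ι ∈ Finset.range (N + 1),
      (ω ι * ∫ x in (0:ℝ)..τ, legP ι x) • v ι := fun τ => by
    rw [hstage τ, ← intervalIntegral.integral_finsetSum_mul_smul _ _
      fun ι _ => ((continuous_legP ι).smul hfZ).intervalIntegrable 0 1]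
    simp_rw [hA]
  have hZ0 : Z 0 = z₀ := by simp [hZ_eq 0]
  have hZ1 : Z 1 = z₁ := by
    rw [hZ_eq 1, hz₁, Finset.sum_range_succ']
    simp [integral_legP_succ, legP_zero, hω0, v]
  have hZ' : ∀ τ, HasDerivAt Z
      (h • ∑ ι ∈ Finset.range (N + 1), (ω ι * legP ι τ) • v ι) τ := fun τ => by
    rw [funext hZ_eq]
    exact ((HasDerivAt.fun_sum fun ι _ =>
      ((((continuous_legP ι).integral_hasStrictDerivAt 0 τ).hasDerivAt.const_mul (ω ι)).smul_const
        (v ι))).const_smul h).const_add z₀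
  refine ⟨hZ0, hZ1, ?_⟩
  rw [← hZ0, ← hZ1]
  exact energy_eq_of_hasDerivAt hH hgrad (by rw [hJinv, J_transpose]) hf _ ω continuous_legP h hZ'
end
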